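/- Let G be a finite p-group acting continuously on a pro-p tree T. Then G fixes a vertex of T. -/

import Mathlib

/-- A profinite graph: a topological space `T` (compact, Hausdorff and totally
disconnected in applications) with continuous incidence maps `d0 d1 : T → T`
satisfying `dᵢ ∘ dⱼ = dⱼ`. -/
structure ProfGraph (T : Type*) [TopologicalSpace T] where
  d0 : T → T
  d1 : T → T
  cont0 : Continuous d0
  cont1 : Continuous d1
  d00 : ∀ x, d0 (d0 x) = d0 x
  d01 : ∀ x, d0 (d1 x) = d1 x
  d10 : ∀ x, d1 (d0 x) = d0 x
  d11 : ∀ x, d1 (d1 x) = d1 x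

namespace ProfGraph

variable {T : Type*} [TopologicalSpace T] (G : ProfGraph T)

/-- `x` is a vertex; equivalently `d0 x = x`. -/
def IsVertex (x : T) : Prop := G.d0 x = x

/-- The space of vertices of `G`. -/
abbrev Verts : Type _ := {x : T // G.IsVertex x}

theorem isVertex_d0 (x : T) : G.IsVertex (G.d0 x) := G.d00 x
theorem isVertex_d1 (x : T) : G.IsVertex (G.d1 x) := G.d01 x

/-- The function `T → 𝔽_p` induced by a function on vertices via `d0`. -/
def ed0 (f : G.Verts → ZMod p) : T → ZMod p := fun x => f ⟨G.d0 x, G.isVertex_d0 x⟩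

/-- The function `T → 𝔽_p` induced by a function on vertices via `d1`. -/
def ed1 (f : G.Verts → ZMod p) : T → ZMod p := fun x => f ⟨G.d1 x, G.isVertex_d1 x⟩

/-- `G` is a pro-`p` tree: the sequence of free profinite `𝔽_p`-modules
`0 → 𝔽_p[[E*(T), *]] → 𝔽_p[[V(T)]] → 𝔽_p → 0` (with maps `e ↦ d1(e) − d0(e)` and the
augmentation) is exact.  By the duality between profinite and discrete `𝔽_p`-modules
this is expressed equivalently (and formalized here) by exactness of the dual sequence
of discrete modules of locally constant functions
`0 → 𝔽_p → LC(V(T), 𝔽_p) → {g ∈ LC(T, 𝔽_p) | g vanishes on V(T)} → 0`,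
where the second map sends `f` to `f∘d1 − f∘d0`:
(i) the vertex set is nonempty; (ii) a locally constant function on vertices with
`f∘d0 = f∘d1` is constant ("connectedness"); (iii) every locally constant function on
`T` vanishing on vertices has the form `f∘d1 − f∘d0` ("simple connectedness"). -/
def IsProPTree (p : ℕ) : Prop :=
  Nonempty G.Verts ∧
    (∀ f : G.Verts → ZMod p, IsLocallyConstant f →
      (∀ x : T, G.ed0 f x = G.ed1 f x) → ∃ c, ∀ v, f v = c) ∧
    (∀ g : T → ZMod p, IsLocallyConstant g → (∀ x, G.IsVertex x → g x = 0) →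
      ∃ f : G.Verts → ZMod p, IsLocallyConstant f ∧ ∀ x, g x = G.ed1 f x - G.ed0 f x)

end ProfGraph

/-!
Induction on `|P|`. A nontrivial finite `p`-group has a central element `g` of order `p`, and
`P ⧸ ⟨g⟩` acts on the subgraph `T^g` of `g`-fixed points, so everything reduces to showing that
`T^g` is again a pro-`p` tree.

This is a computation with the group `C = ⟨g⟩ ≅ ℤ/p` acting on locally constant `𝔽_p`-valued
functions. Choosing a clopen fundamental domain for the free part of the action, every invariant
function vanishing on `T^g` is a norm `∑_{c ∈ C} f (c • ·)`. Feeding this into the exactness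
that defines a pro-`p` tree, an invariant coboundary `δH` vanishing on `T^g` equals `δE` for an
invariant `E` vanishing on `T^g`. If `g` fixed no vertex, `1` would be a norm, which produces
`m` with `m (g • x) = m x - 1` and invariant `δm`; then `m - E` is constant on vertices but moved
by `g`, which is absurd. For connectedness of `T^g`, extend a function on its vertices to a
`g`-invariant `H` on `T`: then `H - E` has zero coboundary, so it is constant on vertices, and it
agrees with `H` on `T^g`. Simple connectedness follows by extending and restricting.
-/

open MulAction Subgroup

section LocallyConstant

variable {X : Type*} [TopologicalSpace X]

theorem IsLocallyConstant.pi {ι Y : Type*} [Finite ι] {f : ι → X → Y}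
    (hf : ∀ i, IsLocallyConstant (f i)) : IsLocallyConstant fun x i => f i x :=
  (LocallyConstant.unflip fun i => ⟨f i, hf i⟩).isLocallyConstant

theorem IsLocallyConstant.finset_sum {ι M : Type*} [AddCommMonoid M] (s : Finset ι)
    {f : ι → X → M} (hf : ∀ i ∈ s, IsLocallyConstant (f i)) :
    IsLocallyConstant fun x => ∑ i ∈ s, f i x := by
  convert (IsLocallyConstant.pi (ι := s) fun i => hf i i.2).comp fun v => ∑ i, v i with x
  exact (Finset.sum_coe_sort s fun i => f i x).symm

theorem IsLocallyConstant.indicator {M : Type*} [Zero M] {f : X → M}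
    (hf : IsLocallyConstant f) {U : Set X} (hU : IsClopen U) :
    IsLocallyConstant (U.indicator f) :=
  (LocallyConstant.indicator ⟨f, hf⟩ hU).isLocallyConstant

variable [CompactSpace X] [T2Space X] [TotallyDisconnectedSpace X]

theorem IsClosed.exists_isLocallyConstant_extension {M : Type*} [Finite M] [Nonempty M]
    {A : Set X} (hA : IsClosed A) {h : A → M} (hh : IsLocallyConstant h) :
    ∃ H : X → M, IsLocallyConstant H ∧ ∀ a : A, H a = h a := by
  obtain ⟨C, hC, hZC, -, hcover, hdisj⟩ := exists_clopen_partition_of_clopen_cover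
    (Z := fun i => Subtype.val '' (h ⁻¹' {i})) (D := fun _ => Set.univ)
    (fun i => hA.isClosedEmbedding_subtypeVal.isClosedMap _ (hh.isClosed_fiber i))
    (fun _ => isClopen_univ) (fun _ => Set.subset_univ _)
    (fun i _ j _ hij => Set.disjoint_image_of_injective Subtype.val_injective
      ((Set.disjoint_singleton.mpr hij).preimage h))
  have hex : ∀ x, ∃ i, x ∈ C i := fun x =>
    Set.mem_iUnion.mp (hcover (Set.mem_iUnion.mpr ⟨Classical.arbitrary M, trivial⟩))
  choose H hH using hex
  have hfiber : ∀ i, H ⁻¹' {i} = C i := fun i => by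
    ext x
    refine ⟨fun hx => hx ▸ hH x, fun hx => ?_⟩
    by_contra hne
    exact Set.disjoint_left.mp (hdisj trivial trivial hne) (hH x) hx
  refine ⟨H, IsLocallyConstant.iff_isOpen_fiber.mpr fun i => hfiber i ▸ (hC i).isOpen,
    fun a => ?_⟩
  rw [← Set.mem_singleton_iff, ← Set.mem_preimage, hfiber]
  exact hZC _ ⟨a, rfl, rfl⟩

end LocallyConstant

section FiniteGroupAction

variable {C X : Type*} [Group C] [MulAction C X]

variable (C) in
def IsWanderingSet (U : Set X) : Prop :=
  ∀ x ∈ U, ∀ c : C, c • x ∈ U → c = 1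

theorem IsWanderingSet.union_diff_saturation {U V : Set X} (hU : IsWanderingSet C U)
    (hV : IsWanderingSet C V) :
    IsWanderingSet C (U ∪ (V \ {x | ∃ c : C, c • x ∈ U})) := by
  rintro x (hxU | ⟨hxV, hxU⟩) c (hcU | ⟨hcV, hcU⟩)
  · exact hU x hxU c hcU
  · exact (hcU ⟨c⁻¹, by rwa [inv_smul_smul]⟩).elim
  · exact (hxU ⟨c, hcU⟩).elim
  · exact hV x hxV c hcV

variable [TopologicalSpace X] [ContinuousConstSMul C X] [Finite C]

theorem IsClopen.saturation {U : Set X} (hU : IsClopen U) :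
    IsClopen {x | ∃ c : C, c • x ∈ U} := by
  convert isClopen_iUnion_of_finite fun c : C => hU.preimage (continuous_const_smul c)
  ext x
  simp

theorem exists_isLocallyConstant_invariant_eq_on_fixedPoints {M : Type*} [Zero M]
    {H₀ : X → M} (hH₀ : IsLocallyConstant H₀) :
    ∃ H : X → M, IsLocallyConstant H ∧ (∀ (c : C) x, H (c • x) = H x) ∧
      ∀ x ∈ fixedPoints C X, H x = H₀ x := by
  classical
  let φ : (C → M) → M := fun v => if ∀ a b, v a = v b then v 1 else 0
  have hφ : ∀ (c : C) x, φ (fun a => H₀ (a • c • x)) = φ (fun a => H₀ (a • x)) := by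
    intro c x
    have hcond : (∀ a b : C, H₀ (a • c • x) = H₀ (b • c • x)) ↔
        ∀ a b : C, H₀ (a • x) = H₀ (b • x) := by
      simp only [← mul_smul]
      exact ⟨fun h a b => by simpa using h (a * c⁻¹) (b * c⁻¹), fun h a b => h _ _⟩
    simp only [φ, hcond]
    split_ifs with h
    · rw [← mul_smul]
      exact h _ _
    · rfl
  refine ⟨fun x => φ fun a => H₀ (a • x),
    (IsLocallyConstant.pi fun a => hH₀.comp_continuous (continuous_const_smul a)).comp φ,
    hφ, fun x hx => ?_⟩
  simp [φ, mem_fixedPoints.mp hx]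

variable [CompactSpace X] [T2Space X] [TotallyDisconnectedSpace X]

theorem exists_isClopen_isWanderingSet_mem {x : X} (hx : ∀ c : C, c • x = x → c = 1) :
    ∃ V : Set X, IsClopen V ∧ IsWanderingSet C V ∧ x ∈ V := by
  have hfin : {y | ∃ c : C, c ≠ 1 ∧ c • x = y}.Finite :=
    (Set.finite_range fun c : C => c • x).subset fun _ ⟨c, _, hc⟩ => ⟨c, hc⟩
  obtain ⟨V₀, hV₀, hxV₀, hV₀sub⟩ := compact_exists_isClopen_in_isOpen hfin.isClosed.isOpen_compl
    (fun ⟨c, hc1, hcx⟩ => hc1 (hx c hcx))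
  refine ⟨V₀ ∩ ⋂ c : C, (c • ·) ⁻¹' ({y | c = 1} ∪ V₀ᶜ), ?_, ?_, ?_⟩
  · refine hV₀.inter (isClopen_iInter_of_finite fun c => IsClopen.preimage ?_
      (continuous_const_smul c))
    by_cases hc : c = 1 <;> simp [hc, hV₀.compl, isClopen_univ]
  · rintro y ⟨-, hy⟩ c ⟨hcy, -⟩
    by_contra hc
    exact ((Set.mem_iInter.mp hy c).resolve_left hc) hcy
  · refine ⟨hxV₀, Set.mem_iInter.mpr fun c => ?_⟩
    by_cases hc : c = 1
    · exact Or.inl hc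
    · exact Or.inr fun hcx => hV₀sub hcx ⟨c, hc, rfl⟩

theorem IsCompact.exists_isClopen_fundamentalDomain {S : Set X} (hS : IsCompact S)
    (hfree : ∀ x ∈ S, ∀ c : C, c • x = x → c = 1) :
    ∃ U : Set X, IsClopen U ∧ ∀ x ∈ S, ∃! c : C, c • x ∈ U := by
  suffices h : ∃ U : Set X, IsClopen U ∧ IsWanderingSet C U ∧ ∀ x ∈ S, ∃ c : C, c • x ∈ U by
    obtain ⟨U, hU, hwand, hcover⟩ := h
    refine ⟨U, hU, fun x hx => ?_⟩
    obtain ⟨c, hc⟩ := hcover x hx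
    refine ⟨c, hc, fun c' hc' => ?_⟩
    have := hwand _ hc (c' * c⁻¹) (by rwa [mul_smul, inv_smul_smul])
    exact mul_inv_eq_one.mp this
  refine hS.induction_on (p := fun S => ∃ U : Set X, IsClopen U ∧ IsWanderingSet C U ∧
    ∀ x ∈ S, ∃ c : C, c • x ∈ U) ?_ ?_ ?_ ?_
  · exact ⟨∅, isClopen_empty, fun _ h => h.elim, fun _ h => h.elim⟩
  · intro s t hst ht
    obtain ⟨U, hU, hwand, hcover⟩ := ht
    exact ⟨U, hU, hwand, fun x hx => hcover x (hst hx)⟩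
  · intro s t hs ht
    obtain ⟨U, hU, hUwand, hUcover⟩ := hs
    obtain ⟨V, hV, hVwand, hVcover⟩ := ht
    refine ⟨_, hU.union (hV.diff hU.saturation), hUwand.union_diff_saturation hVwand, ?_⟩
    rintro x (hx | hx)
    · obtain ⟨c, hc⟩ := hUcover x hx
      exact ⟨c, Or.inl hc⟩
    · obtain ⟨c, hc⟩ := hVcover x hx
      by_cases hsat : c • x ∈ {x | ∃ c : C, c • x ∈ U}
      · obtain ⟨c', hc'⟩ := hsat
        exact ⟨c' * c, Or.inl (by rwa [mul_smul])⟩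
      · exact ⟨c, Or.inr ⟨hc, hsat⟩⟩
  · intro x hx
    obtain ⟨V, hV, hwand, hxV⟩ := exists_isClopen_isWanderingSet_mem (hfree x hx)
    exact ⟨V, mem_nhdsWithin_of_mem_nhds (hV.isOpen.mem_nhds hxV), V, hV, hwand,
      fun y hy => ⟨1, by rwa [one_smul]⟩⟩

end FiniteGroupAction

section Norm

variable {C X : Type*} [Group C] [Fintype C] [MulAction C X] [TopologicalSpace X]
  [ContinuousConstSMul C X] [CompactSpace X] [T2Space X] [TotallyDisconnectedSpace X]

theorem exists_isLocallyConstant_sum_smul_eq {M : Type*} [AddCommMonoid M] {k : X → M}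
    (hk : IsLocallyConstant k) (hinv : ∀ (c : C) x, k (c • x) = k x)
    (hfree : ∀ x, k x ≠ 0 → ∀ c : C, c • x = x → c = 1) :
    ∃ f : X → M, IsLocallyConstant f ∧ (∀ x, k x = 0 → f x = 0) ∧
      ∀ x, ∑ c : C, f (c • x) = k x := by
  obtain ⟨U, hU, hdom⟩ := (hk.isClopen_fiber 0).compl.isClosed.isCompact
    |>.exists_isClopen_fundamentalDomain hfree
  refine ⟨U.indicator k, hk.indicator hU, fun x hx => by simp [hx], fun x => ?_⟩
  by_cases hx : k x = 0
  · exact (Finset.sum_eq_zero fun c _ => by simp [hinv, hx]).trans hx.symm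
  obtain ⟨c₀, hc₀, huniq⟩ := hdom x hx
  rw [Finset.sum_eq_single c₀ (fun c _ hc => Set.indicator_of_notMem
    (fun hcU => hc (huniq c hcU)) _) (by simp), Set.indicator_of_mem hc₀, hinv]

end Norm

instance Subgroup.continuousConstSMul {P T : Type*} [Group P] [TopologicalSpace T]
    [MulAction P T] [ContinuousConstSMul P T] (H : Subgroup P) : ContinuousConstSMul H T :=
  ⟨fun h => continuous_const_smul (h : P)⟩

theorem MulAction.isClosed_fixedPoints {M T : Type*} [Monoid M] [MulAction M T]
    [TopologicalSpace T] [ContinuousConstSMul M T] [T2Space T] : IsClosed (fixedPoints M T) := by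
  rw [fixed_eq_iInter_fixedBy]
  exact isClosed_iInter fun m => isClosed_eq (continuous_const_smul m) continuous_id

instance {M T : Type*} [Monoid M] [MulAction M T] [TopologicalSpace T]
    [ContinuousConstSMul M T] [CompactSpace T] [T2Space T] : CompactSpace (fixedPoints M T) :=
  isCompact_iff_compactSpace.mp MulAction.isClosed_fixedPoints.isCompact

section CyclicGroup

variable {P T : Type*} [Group P] [MulAction P T] {g : P}

theorem smul_eq_self_of_zpowers_smul_eq_self (hg : (orderOf g).Prime) {c : zpowers g}
    (hc : c ≠ 1) {x : T} (hx : c • x = x) : g • x = x := by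
  have : Fact (Nat.card (zpowers g)).Prime := ⟨by rwa [Nat.card_zpowers]⟩
  rcases (stabilizer (zpowers g) x).eq_bot_or_eq_top_of_prime_card with h | h
  · exact (hc ((Subgroup.mem_bot).mp (h ▸ hx : c ∈ (⊥ : Subgroup (zpowers g))))).elim
  · exact (h ▸ Subgroup.mem_top _ : (⟨g, mem_zpowers g⟩ : zpowers g) ∈ stabilizer _ x)

theorem mem_fixedPoints_zpowers_iff {x : T} : x ∈ fixedPoints (zpowers g) T ↔ g • x = x := by
  refine ⟨fun h => h ⟨g, mem_zpowers g⟩, fun hx c => ?_⟩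
  obtain ⟨j, hj⟩ := c.2
  change (c : P) • x = x
  rw [← hj]
  exact mem_fixedBy_zpow hx j

theorem apply_zpowers_smul_eq {M : Type*} {f : T → M} (hf : ∀ x, f (g • x) = f x)
    (c : zpowers g) (x : T) : f (c • x) = f x := by
  have hzpow : ∀ (j : ℤ) x, f (g ^ j • x) = f x := by
    intro j
    induction j using Int.induction_on with
    | zero => simp
    | succ i ih => intro x; rw [zpow_add_one, mul_smul, ih, hf]
    | pred i ih => intro x; rw [zpow_sub_one, mul_smul, ih, ← hf, smul_inv_smul]
  obtain ⟨j, hj⟩ := c.2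
  change f ((c : P) • x) = f x
  rw [← hj]
  exact hzpow j x

theorem sum_zpowers_eq_sum_range {M : Type*} [AddCommMonoid M] [Fintype (zpowers g)]
    (hg : IsOfFinOrder g) (F : P → M) :
    ∑ c : zpowers g, F c = ∑ j ∈ Finset.range (orderOf g), F (g ^ j) := by
  rw [← Fin.sum_univ_eq_sum_range (fun j => F (g ^ j)),
    Fintype.sum_equiv (finEquivZPowers hg).symm _ (fun j => F (g ^ (j : ℕ)))
      (fun c => by rw [pow_finEquivZPowers_symm_apply])]

end CyclicGroup

theorem ZMod.sum_range_natCast_mul_succ {p : ℕ} (a : ℕ → ZMod p) (ha : a p = a 0) :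
    ∑ j ∈ Finset.range p, (j : ZMod p) * a (j + 1) =
      ∑ j ∈ Finset.range p, (j : ZMod p) * a j - ∑ j ∈ Finset.range p, a j := by
  have h1 := Finset.sum_range_succ' (fun j => (j : ZMod p) * a j) p
  have h2 := Finset.sum_range_succ (fun j => (j : ZMod p) * a j) p
  have h3 := Finset.sum_range_succ' a p
  have h4 := Finset.sum_range_succ a p
  simp only [Nat.cast_add, Nat.cast_one, add_mul, one_mul, Finset.sum_add_distrib,
    ZMod.natCast_self, Nat.cast_zero, zero_mul, add_zero] at h1 h2
  rw [ha] at h4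
  linear_combination h2 - h1 - h4 + h3

theorem exists_isLocallyConstant_apply_smul_eq_sub_one {P X : Type*} [Group P] [MulAction P X]
    [TopologicalSpace X] [ContinuousConstSMul P X] [CompactSpace X] [T2Space X]
    [TotallyDisconnectedSpace X] {p : ℕ} [hp : Fact p.Prime] {g : P} (hg : orderOf g = p)
    (hfree : ∀ x : X, g • x ≠ x) :
    ∃ m : X → ZMod p, IsLocallyConstant m ∧ ∀ x, m (g • x) = m x - 1 := by
  have hfin : IsOfFinOrder g := orderOf_pos_iff.mp (hg ▸ hp.out.pos)
  let _ : Fintype (zpowers g) := Fintype.ofEquiv _ (finEquivZPowers hfin)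
  obtain ⟨f, hf, -, hfsum⟩ := exists_isLocallyConstant_sum_smul_eq (C := zpowers g)
    (k := fun _ => (1 : ZMod p)) (IsLocallyConstant.const 1) (fun _ _ => rfl)
    fun x _ c hc => by
      by_contra h
      exact hfree x (smul_eq_self_of_zpowers_smul_eq_self (hg ▸ hp.out) h hc)
  refine ⟨fun x => ∑ j ∈ Finset.range p, (j : ZMod p) * f (g ^ j • x),
    IsLocallyConstant.finset_sum _ fun j _ =>
      (IsLocallyConstant.const _).mul (hf.comp_continuous (continuous_const_smul _)),
    fun x => ?_⟩
  have hnorm : ∑ j ∈ Finset.range p, f (g ^ j • x) = 1 := calc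
    _ = ∑ j ∈ Finset.range (orderOf g), f (g ^ j • x) := by rw [hg]
    _ = 1 := (sum_zpowers_eq_sum_range hfin fun c => f (c • x)).symm.trans (hfsum x)
  rw [← hnorm, ← ZMod.sum_range_natCast_mul_succ (fun j => f (g ^ j • x))
    (by rw [show g ^ p = 1 from hg ▸ pow_orderOf_eq_one g, pow_zero])]
  simp only [← mul_smul, ← pow_succ]

namespace ProfGraph

variable {T : Type*} [TopologicalSpace T] (G : ProfGraph T)

theorem d1_eq_self {x : T} (hx : G.IsVertex x) : G.d1 x = x :=
  (congrArg G.d1 hx).symm.trans ((G.d10 x).trans hx)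

/-- Dual to the map `e ↦ d₁(e) − d₀(e)` of the defining exact sequence. -/
def coboundary {M : Type*} [Sub M] (F : T → M) (x : T) : M := F (G.d1 x) - F (G.d0 x)

section Coboundary

variable {M : Type*} [AddCommGroup M]

theorem coboundary_eq_zero_of_isVertex (F : T → M) {x : T} (hx : G.IsVertex x) :
    G.coboundary F x = 0 := by
  rw [coboundary, G.d1_eq_self hx, show G.d0 x = x from hx, sub_self]

theorem coboundary_sub (F E : T → M) (x : T) :
    G.coboundary (F - E) x = G.coboundary F x - G.coboundary E x := by
  simp only [coboundary, Pi.sub_apply]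
  abel

theorem _root_.IsLocallyConstant.coboundary {F : T → M} (hF : IsLocallyConstant F) :
    IsLocallyConstant (G.coboundary F) :=
  (hF.comp_continuous G.cont1).sub (hF.comp_continuous G.cont0)

end Coboundary

theorem isLocallyConstant_ed0 {p : ℕ} {f : G.Verts → ZMod p} (hf : IsLocallyConstant f) :
    IsLocallyConstant (G.ed0 f) :=
  hf.comp_continuous (G.cont0.subtype_mk _)

variable {G} {p : ℕ}

theorem IsProPTree.exists_forall_isVertex_eq (htree : G.IsProPTree p) {Φ : T → ZMod p}
    (hΦ : IsLocallyConstant Φ) (hδ : ∀ x, G.coboundary Φ x = 0) :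
    ∃ a, ∀ x, G.IsVertex x → Φ x = a := by
  obtain ⟨a, ha⟩ := htree.2.1 (fun v => Φ v) (hΦ.comp_continuous continuous_subtype_val)
    fun x => (sub_eq_zero.mp (hδ x)).symm
  exact ⟨a, fun x hx => ha ⟨x, hx⟩⟩

theorem IsProPTree.exists_coboundary_eq (htree : G.IsProPTree p) {k : T → ZMod p}
    (hk : IsLocallyConstant k) (hkV : ∀ x, G.IsVertex x → k x = 0) :
    ∃ F : T → ZMod p, IsLocallyConstant F ∧ G.coboundary F = k := by
  obtain ⟨f, hf, hfk⟩ := htree.2.2 k hk hkV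
  refine ⟨G.ed0 f, G.isLocallyConstant_ed0 hf, funext fun x => ?_⟩
  simp only [hfk x, coboundary, ed0, ed1, G.d01, G.d00]

section Equivariant

variable {P : Type*} [Group P] [MulAction P T]
  (hd0 : ∀ (g : P) (x : T), G.d0 (g • x) = g • G.d0 x)
  (hd1 : ∀ (g : P) (x : T), G.d1 (g • x) = g • G.d1 x)

include hd0 in
theorem IsVertex.smul {x : T} (hx : G.IsVertex x) (g : P) : G.IsVertex (g • x) :=
  (hd0 g x).trans (congrArg (g • ·) hx)

variable (G) in
def fixedSubgraph (H : Subgroup P) : ProfGraph (fixedPoints H T) where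
  d0 x := ⟨G.d0 x, fun h => (hd0 h x).symm.trans (congrArg G.d0 (x.2 h))⟩
  d1 x := ⟨G.d1 x, fun h => (hd1 h x).symm.trans (congrArg G.d1 (x.2 h))⟩
  cont0 := (G.cont0.comp continuous_subtype_val).subtype_mk _
  cont1 := (G.cont1.comp continuous_subtype_val).subtype_mk _
  d00 x := Subtype.ext (G.d00 x)
  d01 x := Subtype.ext (G.d01 x)
  d10 x := Subtype.ext (G.d10 x)
  d11 x := Subtype.ext (G.d11 x)

end Equivariant

end ProfGraph

namespace ProfGraph

variable {T : Type*} [TopologicalSpace T] [CompactSpace T] [T2Space T]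
  [TotallyDisconnectedSpace T] {G : ProfGraph T} {p : ℕ} [hp : Fact p.Prime]
  {P : Type*} [Group P] [MulAction P T] [ContinuousConstSMul P T]
  (hd0 : ∀ (g : P) (x : T), G.d0 (g • x) = g • G.d0 x)
  (hd1 : ∀ (g : P) (x : T), G.d1 (g • x) = g • G.d1 x)
  {g : P}

include hd0 hd1 in
theorem IsProPTree.exists_invariant_coboundary_eq (htree : G.IsProPTree p)
    (hg : orderOf g = p) {k : T → ZMod p} (hk : IsLocallyConstant k)
    (hkinv : ∀ x, k (g • x) = k x) (hkV : ∀ x, G.IsVertex x → k x = 0)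
    (hkfix : ∀ x, g • x = x → k x = 0) :
    ∃ E : T → ZMod p, IsLocallyConstant E ∧ (∀ x, E (g • x) = E x) ∧
      (∀ x, g • x = x → E x = 0) ∧ G.coboundary E = k := by
  let _ : Fintype (zpowers g) :=
    Fintype.ofEquiv _ (finEquivZPowers (orderOf_pos_iff.mp (hg ▸ hp.out.pos)))
  obtain ⟨f, hf, hfk, hfsum⟩ := exists_isLocallyConstant_sum_smul_eq (C := zpowers g) hk
    (apply_zpowers_smul_eq hkinv) fun x hx c hc => by
      by_contra h
      exact hx (hkfix x (smul_eq_self_of_zpowers_smul_eq_self (hg ▸ hp.out) h hc))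
  obtain ⟨F, hF, rfl⟩ := htree.exists_coboundary_eq hf fun x hx => hfk x (hkV x hx)
  refine ⟨fun x => ∑ c : zpowers g, F (c • x),
    IsLocallyConstant.finset_sum _ fun c _ => hF.comp_continuous (continuous_const_smul c),
    fun x => ?_, fun x hx => ?_, funext fun x => ?_⟩
  · exact Fintype.sum_equiv (Equiv.mulRight ⟨g, mem_zpowers g⟩) _ _
      fun c => by rw [Equiv.coe_mulRight, mul_smul]; rfl
  · -- at a fixed point the norm is `p • F x = 0`
    simp only [mem_fixedPoints.mp (mem_fixedPoints_zpowers_iff.mpr hx), Finset.sum_const,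
      Finset.card_univ, ← Nat.card_eq_fintype_card, Nat.card_zpowers, hg, nsmul_eq_mul,
      ZMod.natCast_self, zero_mul]
  · rw [← hfsum x, coboundary, ← Finset.sum_sub_distrib]
    refine Finset.sum_congr rfl fun c _ => ?_
    simp only [coboundary, Subgroup.smul_def, hd0, hd1]

include hd0 hd1 in
theorem IsProPTree.exists_isVertex_smul_eq (htree : G.IsProPTree p) (hg : orderOf g = p) :
    ∃ v, G.IsVertex v ∧ g • v = v := by
  by_contra hnone
  push Not at hnone
  have hfree : ∀ x, g • x ≠ x := fun x hx => hnone _ (G.isVertex_d0 x) (by rw [← hd0, hx])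
  obtain ⟨m, hm, hmg⟩ := exists_isLocallyConstant_apply_smul_eq_sub_one hg hfree
  obtain ⟨E, hE, hEg, -, hEm⟩ := htree.exists_invariant_coboundary_eq hd0 hd1 hg
    (hm.coboundary G) (fun x => by simp only [coboundary, hd0, hd1, hmg, sub_sub_sub_cancel_right])
    (fun x hx => G.coboundary_eq_zero_of_isVertex m hx) fun x hx => (hfree x hx).elim
  obtain ⟨a, ha⟩ := htree.exists_forall_isVertex_eq (hm.sub hE)
    fun x => by rw [coboundary_sub, hEm, sub_self]
  obtain ⟨v, hv⟩ := htree.1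
  have h := (ha _ (hv.smul hd0 g)).trans (ha v hv).symm
  simp only [Pi.sub_apply, hmg, hEg] at h
  exact one_ne_zero (by linear_combination -h : (1 : ZMod p) = 0)

include hd0 hd1 in
theorem IsProPTree.exists_forall_fixed_isVertex_eq (htree : G.IsProPTree p)
    (hg : orderOf g = p) {H : T → ZMod p} (hH : IsLocallyConstant H)
    (hHg : ∀ x, H (g • x) = H x) (hδ : ∀ x, g • x = x → G.coboundary H x = 0) :
    ∃ a, ∀ x, G.IsVertex x → g • x = x → H x = a := by
  obtain ⟨E, hE, -, hEfix, hEH⟩ := htree.exists_invariant_coboundary_eq hd0 hd1 hg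
    (hH.coboundary G) (fun x => by simp only [coboundary, hd0, hd1, hHg])
    (fun x hx => G.coboundary_eq_zero_of_isVertex H hx) hδ
  obtain ⟨a, ha⟩ := htree.exists_forall_isVertex_eq (hH.sub hE)
    fun x => by rw [coboundary_sub, hEH, sub_self]
  exact ⟨a, fun x hx hgx => by simpa [hEfix x hgx] using ha x hx⟩

include hd0 hd1 in
theorem IsProPTree.fixedSubgraph_zpowers (htree : G.IsProPTree p) (hg : orderOf g = p) :
    (G.fixedSubgraph hd0 hd1 (zpowers g)).IsProPTree p := by
  set G' := G.fixedSubgraph hd0 hd1 (zpowers g)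
  refine ⟨?_, fun f hf hδ => ?_, fun q hq hqV => ?_⟩
  · obtain ⟨v, hv, hgv⟩ := htree.exists_isVertex_smul_eq hd0 hd1 hg
    exact ⟨⟨⟨v, mem_fixedPoints_zpowers_iff.mpr hgv⟩, Subtype.ext hv⟩⟩
  · have : Finite (zpowers g) :=
      (orderOf_pos_iff.mp (hg ▸ hp.out.pos)).finite_zpowers.to_subtype
    obtain ⟨H₀, hH₀, hH₀f⟩ := MulAction.isClosed_fixedPoints.exists_isLocallyConstant_extension
      (G'.isLocallyConstant_ed0 hf)
    obtain ⟨H, hH, hHinv, hHfix⟩ :=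
      exists_isLocallyConstant_invariant_eq_on_fixedPoints (C := zpowers g) hH₀
    have hHf : ∀ y : fixedPoints (zpowers g) T, H y = G'.ed0 f y := fun y =>
      (hHfix y y.2).trans (hH₀f y)
    obtain ⟨a, ha⟩ := htree.exists_forall_fixed_isVertex_eq hd0 hd1 hg hH
      (hHinv ⟨g, mem_zpowers g⟩) fun x hx => by
        let y : fixedPoints (zpowers g) T := ⟨x, mem_fixedPoints_zpowers_iff.mpr hx⟩
        change H (G'.d1 y) - H (G'.d0 y) = 0
        rw [hHf, hHf, sub_eq_zero]
        exact (congrArg f (Subtype.ext (G'.d01 y))).trans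
          ((hδ y).symm.trans (congrArg f (Subtype.ext (G'.d00 y))).symm)
    refine ⟨a, fun y => ?_⟩
    rw [← ha y.1 (congrArg Subtype.val y.2) (mem_fixedPoints_zpowers_iff.mp y.1.2), hHf]
    exact (show G'.ed0 f y.1 = f y from congrArg f (Subtype.ext y.2)).symm
  · obtain ⟨H, hH, hHq⟩ := MulAction.isClosed_fixedPoints.exists_isLocallyConstant_extension hq
    have hHd0 : ∀ y : fixedPoints (zpowers g) T, H (G.d0 y) = 0 := fun y =>
      (hHq (G'.d0 y)).trans (hqV _ (G'.isVertex_d0 y))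
    obtain ⟨F, hF, hFH⟩ := htree.exists_coboundary_eq (hH.sub (hH.comp_continuous G.cont0))
      fun x hx => by rw [Pi.sub_apply, Function.comp_apply, show G.d0 x = x from hx, sub_self]
    refine ⟨fun y => F y.1.1, hF.comp_continuous
      (continuous_subtype_val.comp continuous_subtype_val), fun y => ?_⟩
    have hy := congrFun hFH y
    rw [Pi.sub_apply, Function.comp_apply, hHd0, sub_zero, hHq] at hy
    exact hy.symm

end ProfGraph

theorem Subgroup.normal_zpowers_of_mem_center {P : Type*} [Group P] {g : P}
    (hg : g ∈ center P) : (zpowers g).Normal :=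
  ⟨fun n hn h => by
    rwa [mem_center_iff.mp (zpowers_le.mpr hg hn) h, mul_inv_cancel_right]⟩

theorem IsPGroup.exists_mem_center_orderOf_eq {p : ℕ} [Fact p.Prime] {P : Type*} [Group P]
    [Finite P] [Nontrivial P] (hP : IsPGroup p P) : ∃ g ∈ center P, orderOf g = p := by
  have := hP.center_nontrivial
  obtain ⟨n, hn0, hn⟩ := (hP.to_subgroup (center P)).nontrivial_iff_card.mp this
  obtain ⟨x, hx⟩ := exists_prime_orderOf_dvd_card' (G := center P) p
    (hn ▸ dvd_pow_self p hn0.ne')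
  exact ⟨x, x.2, (Subgroup.orderOf_coe x).trans hx⟩

section QuotientAction

variable {P T : Type*} [Group P] [MulAction P T] {H : Subgroup P} [H.Normal]

instance [TopologicalSpace T] [ContinuousConstSMul P T] :
    ContinuousConstSMul (P ⧸ H) (fixedPoints H T) :=
  ⟨fun q => by
    induction q using QuotientGroup.induction_on with
    | H g => exact ((continuous_const_smul g).comp continuous_subtype_val).subtype_mk _⟩

variable [TopologicalSpace T] {G : ProfGraph T}
  (hd0 : ∀ (g : P) (x : T), G.d0 (g • x) = g • G.d0 x)
  (hd1 : ∀ (g : P) (x : T), G.d1 (g • x) = g • G.d1 x)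

theorem ProfGraph.fixedSubgraph_d0_smul (q : P ⧸ H) (x : fixedPoints H T) :
    (G.fixedSubgraph hd0 hd1 H).d0 (q • x) = q • (G.fixedSubgraph hd0 hd1 H).d0 x := by
  induction q using QuotientGroup.induction_on with
  | H g => exact Subtype.ext (hd0 g x)

theorem ProfGraph.fixedSubgraph_d1_smul (q : P ⧸ H) (x : fixedPoints H T) :
    (G.fixedSubgraph hd0 hd1 H).d1 (q • x) = q • (G.fixedSubgraph hd0 hd1 H).d1 x := by
  induction q using QuotientGroup.induction_on with
  | H g => exact Subtype.ext (hd1 g x)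

end QuotientAction

/-- Theorem 3.9 of Ribes–Zalesskii, "Pro-p trees and applications".
Let `G` be a finite `p`-group acting continuously on a pro-`p` tree `T` (the action
commuting with the incidence maps).  Then `G` fixes a vertex of `T`. -/
theorem finite_p_group_fixes_vertex (p : ℕ) [Fact p.Prime]
    {T : Type*} [TopologicalSpace T] [CompactSpace T] [T2Space T]
    [TotallyDisconnectedSpace T]
    (G : ProfGraph T) (htree : G.IsProPTree p)
    (P : Type*) [Group P] [Finite P] (hP : IsPGroup p P)
    [MulAction P T]
    (hcont : ∀ g : P, Continuous fun x : T => g • x)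
    (hd0 : ∀ (g : P) (x : T), G.d0 (g • x) = g • G.d0 x)
    (hd1 : ∀ (g : P) (x : T), G.d1 (g • x) = g • G.d1 x) :
    ∃ v : T, G.IsVertex v ∧ ∀ g : P, g • v = v := by
  induction hn : Nat.card P using Nat.strong_induction_on generalizing T P with
  | _ n ih =>
  have : ContinuousConstSMul P T := ⟨hcont⟩
  rcases subsingleton_or_nontrivial P with hP1 | hP1
  · obtain ⟨v, hv⟩ := htree.1
    exact ⟨v, hv, fun g => by rw [Subsingleton.elim g 1, one_smul]⟩
  obtain ⟨g, hgZ, hg⟩ := hP.exists_mem_center_orderOf_eq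
  have := normal_zpowers_of_mem_center hgZ
  have hcard : Nat.card (P ⧸ zpowers g) < n := by
    rw [← hn, card_eq_card_quotient_mul_card_subgroup (zpowers g), Nat.card_zpowers, hg]
    exact lt_mul_of_one_lt_right Nat.card_pos (Fact.out : p.Prime).one_lt
  obtain ⟨v, hv, hfix⟩ := ih _ hcard _ (htree.fixedSubgraph_zpowers hd0 hd1 hg) _
    (hP.to_quotient _) (fun q => continuous_const_smul q) (G.fixedSubgraph_d0_smul hd0 hd1)
    (G.fixedSubgraph_d1_smul hd0 hd1) rfl
  exact ⟨v, congrArg Subtype.val hv, fun h => congrArg Subtype.val (hfix h)⟩
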